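/- arXiv:1801.05135 — 2 statements merged into one kernel-verified Lean document; each statement's English description precedes it below -/
import Mathlib

section
/- Consider the T-periodic system ẋ(t) = A(t)x(t) + B(t)u(t) with act-and-wait delayed feedback u(t) = −g(t)F(x(t) − x(t−T)), where g(t) = 0 on [2kT, (2k+1)T) and g(t) = 1 on [(2k+1)T, 2(k+1)T). Then for all k ∈ ℕ, x(2(k+1)T) = Λ x(2kT), where Λ = Υ(T,0)Φ(T,0) + ∫_T^{2T} Υ(2T,s̄) B(s̄) F Φ(s̄−T, 0) ds̄, with Φ the state-transition matrix of ẋ = A(t)x and Υ the state-transition matrix of ẋ = (A(t)−B(t)F)x. -/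
/-!
During the waiting phase `g = 0`, so the state is simply propagated by `Φ`. During the acting
phase `g = 1`, the state solves `ẋ = (A - BF)x + BF x(t - T)`, whose forcing term is already known
from the waiting phase; variation of constants with `Υ` then expresses `x(2(k+1)T)` linearly in
`x(2kT)`, and periodicity of `A` and `B` shifts the transition matrices back to `[0, 2T]`.

Variation of constants is obtained by differentiating `τ ↦ Ψ(b, τ) x(τ)`, the derivative of a
transition matrix in its second argument being read off from the cocycle identity; the same
identity shows that `Ψ(t + c, s + c) = Ψ(t, s)` for a `c`-periodic coefficient.
-/

attribute [local instance] Matrix.normedAddCommGroup Matrix.normedSpace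

open Set Matrix Filter Topology

section Derivatives

variable {𝕜 : Type*} [NontriviallyNormedField 𝕜] {l m n : Type*} [Fintype m] [Fintype n]
  {x : 𝕜}

theorem HasDerivAt.matrix_mul {A : 𝕜 → Matrix l m 𝕜} {B : 𝕜 → Matrix m n 𝕜}
    {A' : Matrix l m 𝕜} {B' : Matrix m n 𝕜} (hA : HasDerivAt A A' x) (hB : HasDerivAt B B' x) :
    HasDerivAt (fun y => A y * B y) (A' * B x + A x * B') x := by
  refine hasDerivAt_pi.2 fun i => hasDerivAt_pi.2 fun j => ?_
  have hAi k := hasDerivAt_pi.1 (hasDerivAt_pi.1 hA i) k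
  have hBj k := hasDerivAt_pi.1 (hasDerivAt_pi.1 hB k) j
  simpa [Matrix.mul_apply, Finset.sum_add_distrib] using
    HasDerivAt.fun_sum fun k _ => (hAi k).mul (hBj k)

theorem HasDerivAt.matrix_mulVec {A : 𝕜 → Matrix l m 𝕜} {v : 𝕜 → m → 𝕜}
    {A' : Matrix l m 𝕜} {v' : m → 𝕜} (hA : HasDerivAt A A' x) (hv : HasDerivAt v v' x) :
    HasDerivAt (fun y => A y *ᵥ v y) (A' *ᵥ v x + A x *ᵥ v') x := by
  refine hasDerivAt_pi.2 fun i => ?_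
  have hAi k := hasDerivAt_pi.1 (hasDerivAt_pi.1 hA i) k
  have hvk := hasDerivAt_pi.1 hv
  simpa [Matrix.mulVec, dotProduct, Finset.sum_add_distrib] using
    HasDerivAt.fun_sum fun k _ => (hAi k).mul (hvk k)

end Derivatives

theorem ContinuousOn.matrix_mulVec {X m n : Type*} [TopologicalSpace X] [Fintype n]
    {A : X → Matrix m n ℝ} {v : X → n → ℝ} {s : Set X} (hA : ContinuousOn A s)
    (hv : ContinuousOn v s) : ContinuousOn (fun x => A x *ᵥ v x) s :=
  (continuous_fst.matrix_mulVec continuous_snd).comp_continuousOn (hA.prodMk hv)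

theorem intervalIntegral.integral_mulVec {m n : Type*} [Fintype m] [Fintype n]
    {M : ℝ → Matrix m n ℝ} {a b : ℝ} (hM : ContinuousOn M (uIcc a b))
    (v : n → ℝ) : (∫ s in a..b, M s) *ᵥ v = ∫ s in a..b, M s *ᵥ v :=
  ((((Matrix.mulVecBilin ℝ ℝ).flip v).toContinuousLinearMap).intervalIntegral_comp_comm
    hM.intervalIntegrable).symm

structure IsStateTransition {ι : Type*} [Fintype ι] [DecidableEq ι] (M : ℝ → Matrix ι ι ℝ)
    (Ψ : ℝ → ℝ → Matrix ι ι ℝ) : Prop where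
  continuous : Continuous fun p : ℝ × ℝ => Ψ p.1 p.2
  apply_self : ∀ s, Ψ s s = 1
  hasDerivAt : ∀ s t, HasDerivAt (fun τ => Ψ τ s) (M t * Ψ t s) t
  mul_eq : ∀ t s r, Ψ t s * Ψ s r = Ψ t r

namespace IsStateTransition

variable {ι : Type*} [Fintype ι] [DecidableEq ι] {M : ℝ → Matrix ι ι ℝ}
  {Ψ : ℝ → ℝ → Matrix ι ι ℝ}

theorem continuous_right (hΨ : IsStateTransition M Ψ) (t : ℝ) : Continuous (Ψ t) :=
  hΨ.continuous.comp (continuous_const.prodMk continuous_id)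

theorem continuous_left (hΨ : IsStateTransition M Ψ) (s : ℝ) : Continuous fun t => Ψ t s :=
  hΨ.continuous.comp (continuous_id.prodMk continuous_const)

-- By the cocycle identity, the difference quotient of `Ψ t ·` at `s` is `-Ψ t σ` times that
-- of `Ψ · s`, which tends to `M s`.
theorem hasDerivAt_right (hΨ : IsStateTransition M Ψ) (t s : ℝ) :
    HasDerivAt (Ψ t) (-(Ψ t s * M s)) s := by
  refine hasDerivAt_iff_tendsto_slope.2 ?_
  have hslope : slope (Ψ t) s = fun σ => -(Ψ t σ * slope (fun τ => Ψ τ s) s σ) := by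
    funext σ
    rw [slope_def_module, slope_def_module, Matrix.mul_smul, ← smul_neg, mul_sub,
      hΨ.mul_eq, hΨ.apply_self, mul_one, neg_sub]
  have hM : Tendsto (slope (fun τ => Ψ τ s) s) (𝓝[≠] s) (𝓝 (M s)) := by
    have h := hasDerivAt_iff_tendsto_slope.1 (hΨ.hasDerivAt s s)
    rwa [hΨ.apply_self, Matrix.mul_one] at h
  rw [hslope]
  exact ((((hΨ.continuous_right t).tendsto s).mono_left nhdsWithin_le_nhds).mul hM).neg

theorem apply_add_apply_add (hΨ : IsStateTransition M Ψ) {c : ℝ} (hM : Function.Periodic M c)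
    (t s : ℝ) : Ψ (t + c) (s + c) = Ψ t s := by
  have hderiv : ∀ τ, HasDerivAt (fun τ => Ψ t τ * Ψ (τ + c) (s + c)) 0 τ := by
    intro τ
    convert (hΨ.hasDerivAt_right t τ).matrix_mul
      ((hΨ.hasDerivAt (s + c) (τ + c)).comp_add_const τ c) using 1
    rw [hM τ, neg_mul, Matrix.mul_assoc, neg_add_cancel]
  have hconst := is_const_of_deriv_eq_zero (fun τ => (hderiv τ).differentiableAt)
    (fun τ => (hderiv τ).deriv) s t
  simpa [hΨ.apply_self] using hconst.symm

theorem eq_mulVec_add_integral (hΨ : IsStateTransition M Ψ) {x c : ℝ → ι → ℝ} {a b : ℝ}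
    (hab : a ≤ b) (hx : ContinuousOn x (Icc a b)) (hc : ContinuousOn c (Icc a b))
    (hxc : ∀ t ∈ Ioo a b, HasDerivAt x (M t *ᵥ x t + c t) t) :
    x b = Ψ b a *ᵥ x a + ∫ s in a..b, Ψ b s *ᵥ c s := by
  have hderiv : ∀ τ ∈ Ioo a b, HasDerivAt (fun τ => Ψ b τ *ᵥ x τ) (Ψ b τ *ᵥ c τ) τ := by
    intro τ hτ
    convert (hΨ.hasDerivAt_right b τ).matrix_mulVec (hxc τ hτ) using 1
    rw [Matrix.neg_mulVec, ← Matrix.mulVec_mulVec, Matrix.mulVec_add]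
    abel
  have hcont : ContinuousOn (fun s => Ψ b s *ᵥ c s) (Icc a b) :=
    ((hΨ.continuous_right b).continuousOn).matrix_mulVec hc
  have hFTC := intervalIntegral.integral_eq_sub_of_hasDerivAt_of_le hab
    (((hΨ.continuous_right b).continuousOn).matrix_mulVec hx) hderiv
    (hcont.intervalIntegrable_of_Icc hab)
  rw [hFTC, hΨ.apply_self, Matrix.one_mulVec]
  abel

end IsStateTransition

namespace ActAndWait

variable {n m : ℕ} {T a b : ℝ} {A : ℝ → Matrix (Fin n) (Fin n) ℝ}
  {B : ℝ → Matrix (Fin n) (Fin m) ℝ} {F : Matrix (Fin m) (Fin n) ℝ} {g : ℝ → ℝ}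
  {x : ℝ → Fin n → ℝ}

theorem ne_nat_mul_of_mem_Ioo (hT : 0 < T) {j : ℕ} {t : ℝ} (ht : t ∈ Ioo (j * T) (j * T + T))
    (i : ℕ) : t ≠ i * T := by
  rintro rfl
  have hji : j < i := by exact_mod_cast (mul_lt_mul_iff_of_pos_right hT).1 ht.1
  have hij : i < j + 1 := by
    have hlt : (i : ℝ) * T < (j + 1) * T := by linarith [ht.2]
    exact_mod_cast (mul_lt_mul_iff_of_pos_right hT).1 hlt
  omega

theorem eq_mulVec_of_wait {Φ : ℝ → ℝ → Matrix (Fin n) (Fin n) ℝ} (hΦ : IsStateTransition A Φ)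
    (hxcont : ContinuousOn x (Icc a b))
    (hx : ∀ t ∈ Ioo a b, HasDerivAt x (A t *ᵥ x t - g t • (B t * F) *ᵥ (x t - x (t - T))) t)
    (hg : ∀ t ∈ Ioo a b, g t = 0) :
    ∀ t ∈ Icc a b, x t = Φ t a *ᵥ x a := by
  intro t ht
  have hode : ∀ τ ∈ Ioo a t, HasDerivAt x (A τ *ᵥ x τ + 0) τ := by
    intro τ hτ
    have hτ' : τ ∈ Ioo a b := ⟨hτ.1, hτ.2.trans_le ht.2⟩
    simpa [hg τ hτ'] using hx τ hτ'
  simpa using hΦ.eq_mulVec_add_integral ht.1 (hxcont.mono (Icc_subset_Icc_right ht.2))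
    continuousOn_const hode

theorem eq_mulVec_add_integral_of_act {Υ : ℝ → ℝ → Matrix (Fin n) (Fin n) ℝ}
    (hΥ : IsStateTransition (fun t => A t - B t * F) Υ) (hBcont : Continuous B)
    (hxcont : Continuous x) (hab : a ≤ b)
    (hx : ∀ t ∈ Ioo a b, HasDerivAt x (A t *ᵥ x t - g t • (B t * F) *ᵥ (x t - x (t - T))) t)
    (hg : ∀ t ∈ Ioo a b, g t = 1) :
    x b = Υ b a *ᵥ x a + ∫ s in a..b, Υ b s *ᵥ ((B s * F) *ᵥ x (s - T)) := by
  refine hΥ.eq_mulVec_add_integral hab hxcont.continuousOn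
    (((hBcont.matrix_mul continuous_const).matrix_mulVec
      (hxcont.comp (continuous_sub_right T))).continuousOn) fun τ hτ => ?_
  convert hx τ hτ using 1
  rw [hg τ hτ, one_smul, Matrix.sub_mulVec, Matrix.mulVec_sub]
  abel

theorem eq_monodromy_mulVec {Φ Υ : ℝ → ℝ → Matrix (Fin n) (Fin n) ℝ} (hT : 0 ≤ T)
    (hAper : Function.Periodic A T) (hBper : Function.Periodic B T)
    (hAa : Function.Periodic A a) (hBa : Function.Periodic B a) (hBcont : Continuous B)
    (hΦ : IsStateTransition A Φ) (hΥ : IsStateTransition (fun t => A t - B t * F) Υ)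
    (hwait : ∀ t ∈ Icc a (T + a), x t = Φ t a *ᵥ x a)
    (hact : x (2 * T + a) = Υ (2 * T + a) (T + a) *ᵥ x (T + a) +
      ∫ s in (T + a)..(2 * T + a), Υ (2 * T + a) s *ᵥ ((B s * F) *ᵥ x (s - T))) :
    x (2 * T + a) = (Υ T 0 * Φ T 0 +
      ∫ s in T..(2 * T), Υ (2 * T) s * B s * F * Φ (s - T) 0) *ᵥ x a := by
  have hΦa (t : ℝ) : Φ (t + a) a = Φ t 0 := by simpa using hΦ.apply_add_apply_add hAa t 0
  have hΥa (t s : ℝ) : Υ (t + a) (s + a) = Υ t s :=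
    hΥ.apply_add_apply_add (fun τ => by simp only [hAa τ, hBa τ]) t s
  have hΥT : Υ (2 * T) T = Υ T 0 := by
    simpa [two_mul] using hΥ.apply_add_apply_add (fun τ => by simp only [hAper τ, hBper τ]) T 0
  have hforcing : ∫ s in (T + a)..(2 * T + a), Υ (2 * T + a) s *ᵥ ((B s * F) *ᵥ x (s - T)) =
      ∫ s in T..(2 * T), (Υ (2 * T) s * B s * F * Φ (s - T) 0) *ᵥ x a := by
    rw [← intervalIntegral.integral_comp_add_right]
    refine intervalIntegral.integral_congr fun s hs => ?_
    rw [uIcc_of_le (by linarith)] at hs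
    rw [add_sub_right_comm, hwait (s - T + a) ⟨by linarith [hs.1], by linarith [hs.2]⟩, hΦa,
      hΥa, hBa s]
    simp only [Matrix.mulVec_mulVec, Matrix.mul_assoc]
  rw [hact, hforcing, hwait (T + a) ⟨by linarith, le_rfl⟩, Matrix.mulVec_mulVec, hΥa, hΦa, hΥT,
    ← intervalIntegral.integral_mulVec, Matrix.add_mulVec]
  exact ((((hΥ.continuous_right _).matrix_mul hBcont).matrix_mul continuous_const).matrix_mul
    ((hΦ.continuous_left 0).comp (continuous_sub_right T))).continuousOn

end ActAndWait

theorem stmt4_general {n m : ℕ} (T : ℝ) (hT : 0 < T)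
    (A : ℝ → Matrix (Fin n) (Fin n) ℝ) (hAper : ∀ t, A (t + T) = A t)
    (B : ℝ → Matrix (Fin n) (Fin m) ℝ) (hBcont : Continuous B) (hBper : ∀ t, B (t + T) = B t)
    (F : Matrix (Fin m) (Fin n) ℝ)
    (g : ℝ → ℝ)
    (hg0 : ∀ (k : ℕ) t, (2 * k * T) ≤ t → t < (2 * k + 1) * T → g t = 0)
    (hg1 : ∀ (k : ℕ) t, ((2 * k + 1) * T) ≤ t → t < (2 * (k + 1)) * T → g t = 1)
    -- state-transition matrix of the uncontrolled system ẋ = A(t)x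
    (Φ : ℝ → ℝ → Matrix (Fin n) (Fin n) ℝ)
    (hΦcont : Continuous fun p : ℝ × ℝ => Φ p.1 p.2)
    (hΦinit : ∀ s, Φ s s = 1)
    (hΦode : ∀ s t, HasDerivAt (fun τ => Φ τ s) (A t * Φ t s) t)
    (hΦcocycle : ∀ t s r, Φ t s * Φ s r = Φ t r)
    -- state-transition matrix of ẋ = (A(t) − B(t)F)x
    (Υ : ℝ → ℝ → Matrix (Fin n) (Fin n) ℝ)
    (hΥcont : Continuous fun p : ℝ × ℝ => Υ p.1 p.2)
    (hΥinit : ∀ s, Υ s s = 1)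
    (hΥode : ∀ s t, HasDerivAt (fun τ => Υ τ s) ((A t - B t * F) * Υ t s) t)
    (hΥcocycle : ∀ t s r, Υ t s * Υ s r = Υ t r)
    -- the closed-loop state: continuous, and solves the closed-loop ODE away from the
    -- switching instants kT
    (x : ℝ → (Fin n → ℝ)) (hxcont : Continuous x)
    (hxode : ∀ t : ℝ, 0 < t → (∀ k : ℕ, t ≠ k * T) →
      HasDerivAt x
        ((A t).mulVec (x t) - g t • (B t * F).mulVec (x t - x (t - T))) t) :
    ∀ k : ℕ,
      x (2 * (k + 1) * T) =
        (Υ T 0 * Φ T 0 +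
          ∫ s in T..(2 * T), Υ (2 * T) s * B s * F * Φ (s - T) 0).mulVec
          (x (2 * k * T)) := by
  intro k
  have hΦ : IsStateTransition A Φ := ⟨hΦcont, hΦinit, hΦode, hΦcocycle⟩
  have hΥ : IsStateTransition (fun t => A t - B t * F) Υ := ⟨hΥcont, hΥinit, hΥode, hΥcocycle⟩
  set a : ℝ := 2 * k * T with ha
  have hx (j : ℕ) (t : ℝ) (ht : t ∈ Ioo (j * T) (j * T + T)) :=
    hxode t ((by positivity : (0 : ℝ) ≤ j * T).trans_lt ht.1)
      (ActAndWait.ne_nat_mul_of_mem_Ioo hT ht)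
  have hwait := ActAndWait.eq_mulVec_of_wait (b := T + a) hΦ hxcont.continuousOn
    (fun t ht => hx (2 * k) t (by push_cast; exact ⟨ht.1, by linarith [ht.2]⟩))
    (fun t ht => hg0 k t ht.1.le (by linarith [ht.2]))
  have hact := ActAndWait.eq_mulVec_add_integral_of_act (a := T + a) (b := 2 * T + a) hΥ hBcont
    hxcont (by linarith)
    (fun t ht => hx (2 * k + 1) t (by push_cast; constructor <;> linarith [ht.1, ht.2]))
    (fun t ht => hg1 k t (by linarith [ht.1]) (by linarith [ht.2]))
  rw [show 2 * ((k : ℝ) + 1) * T = 2 * T + a by ring]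
  exact ActAndWait.eq_monodromy_mulVec hT.le hAper hBper
    (by simpa [ha] using Function.Periodic.nat_mul hAper (2 * k))
    (by simpa [ha] using Function.Periodic.nat_mul hBper (2 * k)) hBcont hΦ hΥ hwait hact

/-- for the `T`-periodic system `ẋ = A(t)x + B(t)u(t)` with act-and-wait delayed
feedback `u(t) = −g(t)F(x(t) − x(t−T))`, the state at even multiples of `T` satisfies
`x(2(k+1)T) = Λ x(2kT)` with
`Λ = Υ(T,0)Φ(T,0) + ∫_T^{2T} Υ(2T,s)B(s)FΦ(s−T,0) ds`. -/
theorem stmt4 {n m : ℕ} (T : ℝ) (hT : 0 < T)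
    (A : ℝ → Matrix (Fin n) (Fin n) ℝ) (hAcont : Continuous A) (hAper : ∀ t, A (t + T) = A t)
    (B : ℝ → Matrix (Fin n) (Fin m) ℝ) (hBcont : Continuous B) (hBper : ∀ t, B (t + T) = B t)
    (F : Matrix (Fin m) (Fin n) ℝ)
    (g : ℝ → ℝ)
    (hg0 : ∀ (k : ℕ) t, (2 * k * T) ≤ t → t < (2 * k + 1) * T → g t = 0)
    (hg1 : ∀ (k : ℕ) t, ((2 * k + 1) * T) ≤ t → t < (2 * (k + 1)) * T → g t = 1)
    -- state-transition matrix of the uncontrolled system ẋ = A(t)x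
    (Φ : ℝ → ℝ → Matrix (Fin n) (Fin n) ℝ)
    (hΦcont : Continuous fun p : ℝ × ℝ => Φ p.1 p.2)
    (hΦinit : ∀ s, Φ s s = 1)
    (hΦode : ∀ s t, HasDerivAt (fun τ => Φ τ s) (A t * Φ t s) t)
    (hΦcocycle : ∀ t s r, Φ t s * Φ s r = Φ t r)
    -- state-transition matrix of ẋ = (A(t) − B(t)F)x
    (Υ : ℝ → ℝ → Matrix (Fin n) (Fin n) ℝ)
    (hΥcont : Continuous fun p : ℝ × ℝ => Υ p.1 p.2)
    (hΥinit : ∀ s, Υ s s = 1)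
    (hΥode : ∀ s t, HasDerivAt (fun τ => Υ τ s) ((A t - B t * F) * Υ t s) t)
    (hΥcocycle : ∀ t s r, Υ t s * Υ s r = Υ t r)
    -- the closed-loop state: continuous, and solves the closed-loop ODE away from the
    -- switching instants kT
    (x : ℝ → (Fin n → ℝ)) (hxcont : Continuous x)
    (hxode : ∀ t : ℝ, 0 < t → (∀ k : ℕ, t ≠ k * T) →
      HasDerivAt x
        ((A t).mulVec (x t) - g t • (B t * F).mulVec (x t - x (t - T))) t) :
    ∀ k : ℕ,
      x (2 * (k + 1) * T) =
        (Υ T 0 * Φ T 0 +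
          ∫ s in T..(2 * T), Υ (2 * T) s * B s * F * Φ (s - T) 0).mulVec
          (x (2 * k * T)) :=
  stmt4_general T hT A hAper B hBcont hBper F g hg0 hg1 Φ hΦcont hΦinit hΦode hΦcocycle Υ hΥcont
    hΥinit hΥode hΥcocycle x hxcont hxode
end

section
/- For the 2-dimensional system with A(t) = [[0.5, 0.5], [0, 2π sin(2πt)/(2 − cos(2πt))]], the vector-valued function x*(t) = ( (cos(2πt) − 4π sin(2πt))/(1+16π²) − 2 , 2 − cos(2πt) ) is a 1-periodic solution of ẋ(t) = A(t) x(t). -/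
/-!
The second coordinate `y = 2 - cos 2πt` never vanishes, and the (2,2) entry of `A` is its
logarithmic derivative `y'/y`, so `y' = a(t) y`. The first equation then reads
`x₁' = (x₁ + y)/2`; writing `x₁ = u - 2` it becomes `u' = (u - cos 2πt)/2`, whose unique
1-periodic solution is the trigonometric polynomial `(cos 2πt - 4π sin 2πt)/(1 + 16π²)`,
found by undetermined coefficients.
-/

open Real

theorem Function.Periodic.comp_two_pi_mul {α : Type*} {f : ℝ → α}
    (hf : Function.Periodic f (2 * π)) : Function.Periodic (fun t => f (2 * π * t)) 1 := by
  have h := hf.const_mul (2 * π)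
  rwa [inv_mul_cancel₀ two_pi_pos.ne'] at h

theorem HasDerivAt.finTwo {E : Type*} [NormedAddCommGroup E] [NormedSpace ℝ E]
    {f g : ℝ → E} {f' g' : E} {t : ℝ} (hf : HasDerivAt f f' t) (hg : HasDerivAt g g' t) :
    HasDerivAt (fun t => ![f t, g t]) ![f', g'] t :=
  hasDerivAt_pi.2 fun i => by fin_cases i <;> assumption

theorem hasDerivAt_cos_mul (ω t : ℝ) :
    HasDerivAt (fun t => cos (ω * t)) (-(ω * sin (ω * t))) t := by
  simpa [mul_comm] using ((hasDerivAt_id t).const_mul ω).cos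

theorem hasDerivAt_sin_mul (ω t : ℝ) :
    HasDerivAt (fun t => sin (ω * t)) (ω * cos (ω * t)) t := by
  simpa [mul_comm] using ((hasDerivAt_id t).const_mul ω).sin

theorem two_sub_cos_pos (x : ℝ) : 0 < 2 - cos x := by
  linarith [cos_le_one x]

theorem hasDerivAt_periodic_forced (t : ℝ) :
    HasDerivAt (fun t => (cos (2 * π * t) - 4 * π * sin (2 * π * t)) / (1 + 16 * π ^ 2))
      (((cos (2 * π * t) - 4 * π * sin (2 * π * t)) / (1 + 16 * π ^ 2)
        - cos (2 * π * t)) / 2) t := by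
  have h := ((hasDerivAt_cos_mul (2 * π) t).sub
    ((hasDerivAt_sin_mul (2 * π) t).const_mul (4 * π))).div_const (1 + 16 * π ^ 2)
  refine h.congr_deriv ?_
  have : (1 + 16 * π ^ 2) ≠ 0 := by positivity
  field_simp
  ring

theorem hasDerivAt_two_sub_cos (t : ℝ) :
    HasDerivAt (fun t => 2 - cos (2 * π * t))
      (2 * π * sin (2 * π * t) / (2 - cos (2 * π * t)) * (2 - cos (2 * π * t))) t := by
  rw [div_mul_cancel₀ _ (two_sub_cos_pos _).ne']
  simpa using (hasDerivAt_cos_mul (2 * π) t).const_sub 2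

/-- for `A(t) = [[0.5, 0.5], [0, 2π sin(2πt)/(2 − cos(2πt))]]`, the function
`x*(t) = ((cos(2πt) − 4π sin(2πt))/(1+16π²) − 2, 2 − cos(2πt))` is a 1-periodic solution
of `ẋ = A(t)x`. -/
theorem stmt16
    (A : ℝ → Matrix (Fin 2) (Fin 2) ℝ)
    (hA : ∀ t, A t =
      !![(0.5 : ℝ), 0.5;
         0, 2 * π * Real.sin (2 * π * t) / (2 - Real.cos (2 * π * t))])
    (xs : ℝ → (Fin 2 → ℝ))
    (hxs : ∀ t, xs t =
      ![(Real.cos (2 * π * t) - 4 * π * Real.sin (2 * π * t)) / (1 + 16 * π ^ 2) - 2,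
        2 - Real.cos (2 * π * t)]) :
    (∀ t, HasDerivAt xs ((A t).mulVec (xs t)) t) ∧ (∀ t, xs (t + 1) = xs t) := by
  rw [funext hxs]
  refine ⟨fun t => ?_, fun t => ?_⟩
  · convert ((hasDerivAt_periodic_forced t).sub_const 2).finTwo (hasDerivAt_two_sub_cos t)
      using 1
    ext i
    fin_cases i
    · simp only [hA, Matrix.mulVec, dotProduct, Fin.sum_univ_two, Matrix.of_apply,
        Matrix.cons_val', Matrix.cons_val_fin_one, Matrix.cons_val_zero, Matrix.cons_val_one, Fin.zero_eta]
      ring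
    · simp [hA, Matrix.mulVec, dotProduct, Fin.sum_univ_two]
  · simp only [cos_periodic.comp_two_pi_mul t, sin_periodic.comp_two_pi_mul t]
end
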